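/- arXiv:math/0111195 — 4 statements merged into one kernel-verified Lean document; each statement's English description precedes it below -/
import Mathlib

section
/- For all 1 ≤ i, j ≤ r+1, the element (∧^r Q)_i·w_j − (∧^r Q)_j·w_i belongs to the ideal (v_1, …, v_r) of S. -/
/-- Let `S` be a commutative ring, `r ≥ 1`, `w : Fin (r+1) → S`,
`Q` an `r × (r+1)` matrix over `S`, and `v i = ∑ j, Q i j * w j`.
With `(∧^r Q)_i = (-1)^(i+1) · det(Q with i-th column deleted)` (1-indexed;
here `(-1)^(i : ℕ)` for 0-indexed `i`), for all `i, j` the element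
`(∧^r Q)_i * w j - (∧^r Q)_j * w i` lies in the ideal `(v_1, …, v_r)`. -/
theorem stmt_0 (S : Type*) [CommRing S] (r : ℕ) (hr : 1 ≤ r)
    (w : Fin (r + 1) → S) (Q : Matrix (Fin r) (Fin (r + 1)) S)
    (v : Fin r → S) (hv : ∀ i, v i = ∑ j, Q i j * w j)
    (g : Fin (r + 1) → S)
    (hg : ∀ i, g i = (-1 : S) ^ (i : ℕ) * (Q.submatrix id i.succAbove).det) :
    ∀ i j, g i * w j - g j * w i ∈ Ideal.span (Set.range v) := by
  classical
  intro i j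
  set A : Fin (r + 1) → Matrix (Fin (r + 1)) (Fin (r + 1)) S :=
    fun t => Matrix.of (Fin.lastCases (Pi.single t (1 : S)) (fun m => Q m)) with hA
  have hArow : ∀ t (m : Fin r), A t (Fin.castSucc m) = Q m := by
    intro t m; ext k; simp [hA, Fin.lastCases_castSucc]
  have hAlast : ∀ t, A t (Fin.last r) = Pi.single t 1 := by
    intro t; ext k; simp [hA, Fin.lastCases_last]
  have hdet : ∀ t, (A t).det = (-1 : S) ^ r * g t := by
    intro t
    rw [Matrix.det_succ_row (A t) (Fin.last r),
      Finset.sum_eq_single t]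
    · have h1 : A t (Fin.last r) t = 1 := by simp [hAlast]
      have h2 : (A t).submatrix (Fin.last r).succAbove t.succAbove
          = Q.submatrix id t.succAbove := by
        ext m k
        simp [Fin.succAbove_last, Matrix.submatrix_apply, hArow]
      rw [h1, h2, hg, Fin.val_last, pow_add]
      ring
    · intro b _ hb
      have : A t (Fin.last r) b = 0 := by
        rw [hAlast]; exact Pi.single_eq_of_ne hb 1
      rw [this]; ring
    · intro h; exact absurd (Finset.mem_univ t) h
  have hadj : ∀ t, (A t).adjugate i (Fin.last r) = (A i).det := by
    intro t
    rw [Matrix.adjugate_apply]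
    congr 1
    ext m k
    refine Fin.lastCases ?_ ?_ m
    · rw [Matrix.updateRow_self, hAlast]
    · intro m'
      rw [Matrix.updateRow_ne (Fin.castSucc_lt_last m').ne, hArow, hArow]
  have key : (A j).adjugate.mulVec ((A j).mulVec w) = (A j).det • w := by
    rw [Matrix.mulVec_mulVec, Matrix.adjugate_mul, Matrix.smul_mulVec,
      Matrix.one_mulVec]
  have keyi := congrFun key i
  simp only [Matrix.mulVec, dotProduct, Pi.smul_apply, smul_eq_mul] at keyi
  -- split the inner sums
  have hmv : ∀ k : Fin (r + 1), (∑ l, A j k l * w l) =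
      Fin.lastCases (w j) (fun m => v m) k := by
    refine Fin.lastCases ?_ ?_
    · rw [hAlast]
      simp [Pi.single_apply, Finset.sum_ite_eq' Finset.univ j (fun l => w l)]
    · intro m
      simp [hArow, hv, Fin.lastCases_castSucc]
  simp only [hmv] at keyi
  rw [Fin.sum_univ_castSucc] at keyi
  simp only [Fin.lastCases_castSucc, Fin.lastCases_last] at keyi
  rw [hadj, hdet, hdet] at keyi
  -- keyi : ∑ m, adj i (castSucc m) * v m + (-1)^r * g i * w j = (-1)^r * g j * w i
  have hsq : (-1 : S) ^ r * (-1 : S) ^ r = 1 := by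
    rw [← mul_pow]; norm_num
  have hexpr : g i * w j - g j * w i =
      ∑ m : Fin r, (-((-1 : S) ^ r) * (A j).adjugate i (Fin.castSucc m)) * v m := by
    have h1 : (-1 : S) ^ r * (g i * w j - g j * w i)
        = -(∑ m : Fin r, (A j).adjugate i (Fin.castSucc m) * v m) := by
      rw [mul_sub]
      rw [show (-1 : S) ^ r * (g i * w j) = (-1 : S) ^ r * g i * w j by ring,
        show (-1 : S) ^ r * (g j * w i) = (-1 : S) ^ r * g j * w i by ring,
        ← keyi]
      ring
    calc g i * w j - g j * w i
        = (-1 : S) ^ r * ((-1 : S) ^ r * (g i * w j - g j * w i)) := by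
          rw [← mul_assoc, hsq, one_mul]
      _ = ∑ m : Fin r, (-((-1 : S) ^ r) * (A j).adjugate i (Fin.castSucc m)) * v m := by
          rw [h1, mul_neg, Finset.mul_sum, ← Finset.sum_neg_distrib]
          exact Finset.sum_congr rfl (fun m _ => by ring)
  rw [hexpr]
  exact Ideal.sum_mem _ fun m _ =>
    Ideal.mul_mem_left _ _ (Ideal.subset_span ⟨m, rfl⟩)
end

section
/- There exists an S-module homomorphism s from the ideal J to the quotient module S/I such that s(w_i) = g_i mod I for all i = 1, …, r+1. -/
/-!
Reduced modulo `I`, the column `w` is killed by `Q`. Stacking the unit row `eᵢ` on top of `Q`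
and applying Cramer's rule (`adj N * N = det N • 1`) to the resulting square matrix `N` gives
`gᵢ wₖ ≡ gₖ wᵢ (mod I)`, so the map `S^{r+1} → S/I, eⱼ ↦ gⱼ` kills the Koszul relations
`wᵢ eⱼ - wⱼ eᵢ`. Because `w` is a regular sequence, these relations generate every syzygy of `w`,
i.e. the kernel of `S^{r+1} → J, eⱼ ↦ wⱼ`; hence the map descends to `J`.
-/

open Matrix

section Minors

variable {R : Type*} [CommRing R] {r : ℕ} (Q : Matrix (Fin r) (Fin (r + 1)) R)

theorem Matrix.det_of_vecCons_single (i : Fin (r + 1)) :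
    (of (vecCons (Pi.single i 1) (fun l => Q l))).det =
      (-1) ^ (i : ℕ) * (Q.submatrix id i.succAbove).det := by
  rw [det_succ_row_zero, Finset.sum_eq_single i]
  · simp [submatrix]
  · intro j _ hj
    simp [hj]
  · simp

theorem Matrix.adjugate_of_vecCons_single_apply_zero (i k : Fin (r + 1)) :
    (of (vecCons (Pi.single i 1) (fun l => Q l))).adjugate k 0 =
      (of (vecCons (Pi.single k 1) (fun l => Q l))).det := by
  rw [adjugate_apply]
  congr 1
  ext a b
  refine Fin.cases ?_ (fun l => ?_) a <;> simp

theorem Matrix.det_of_vecCons_single_mul_eq_of_mulVec_eq_zero {x : Fin (r + 1) → R}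
    (hx : Q *ᵥ x = 0) (i k : Fin (r + 1)) :
    (of (vecCons (Pi.single i 1) (fun l => Q l))).det * x k =
      (of (vecCons (Pi.single k 1) (fun l => Q l))).det * x i := by
  have hNx : of (vecCons (Pi.single i 1) (fun l => Q l)) *ᵥ x = Pi.single 0 (x i) := by
    ext a
    refine Fin.cases ?_ (fun l => ?_) a
    · simp [mulVec, dotProduct, Pi.single_apply]
    · simpa [mulVec] using congrFun hx l
  have := congrFun (congrArg (adjugate (of (vecCons (Pi.single i 1) (fun l => Q l))) *ᵥ ·) hNx) k
  simp only [mulVec_mulVec, adjugate_mul, smul_mulVec, one_mulVec, mulVec_single] at this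
  simpa [adjugate_of_vecCons_single_apply_zero, mul_comm] using this

theorem Matrix.minor_mul_eq_of_mulVec_eq_zero {x : Fin (r + 1) → R} (hx : Q *ᵥ x = 0)
    (i k : Fin (r + 1)) :
    (-1) ^ (i : ℕ) * (Q.submatrix id i.succAbove).det * x k =
      (-1) ^ (k : ℕ) * (Q.submatrix id k.succAbove).det * x i := by
  simpa only [det_of_vecCons_single] using det_of_vecCons_single_mul_eq_of_mulVec_eq_zero Q hx i k

theorem Matrix.minor_mul_sub_mem_span_range_mulVec (x : Fin (r + 1) → R) (i k : Fin (r + 1)) :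
    (-1) ^ (i : ℕ) * (Q.submatrix id i.succAbove).det * x k -
      (-1) ^ (k : ℕ) * (Q.submatrix id k.succAbove).det * x i ∈
      Ideal.span (Set.range (Q *ᵥ x)) := by
  set f := Ideal.Quotient.mk (Ideal.span (Set.range (Q *ᵥ x)))
  have hx : Q.map f *ᵥ (f ∘ x) = 0 := by
    ext l
    rw [← RingHom.map_mulVec, Pi.zero_apply, Ideal.Quotient.eq_zero_iff_mem]
    exact Ideal.subset_span ⟨l, rfl⟩
  rw [← Ideal.Quotient.eq_zero_iff_mem, map_sub, sub_eq_zero]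
  simpa [RingHom.map_det, submatrix_map] using minor_mul_eq_of_mulVec_eq_zero (Q.map f) hx i k

end Minors

open Submodule

section Koszul

variable {S : Type*} [CommRing S]

theorem RingTheory.Sequence.IsWeaklyRegular.mem_span_of_mul_mem {m : ℕ} {w : Fin m → S}
    (hreg : IsWeaklyRegular S (List.ofFn w)) (k : Fin m) {b : S}
    (hb : b * w k ∈ Ideal.span (w '' {j | j < k})) : b ∈ Ideal.span (w '' {j | j < k}) := by
  have hset : {x | x ∈ (List.ofFn w).take k} = w '' {j | j < k} := by
    ext x
    simp only [Set.mem_ofPred_eq, List.mem_take_iff_getElem, List.length_ofFn,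
      List.getElem_ofFn, Set.mem_image, Fin.lt_def]
    constructor
    · rintro ⟨i, hi, rfl⟩
      exact ⟨⟨i, by omega⟩, (lt_min_iff.1 hi).1, rfl⟩
    · rintro ⟨j, hj, rfl⟩
      exact ⟨j, by omega, rfl⟩
  have hideal : (Ideal.ofList ((List.ofFn w).take k) • ⊤ : Submodule S S) =
      Ideal.span (w '' {j | j < k}) := by
    rw [Ideal.smul_eq_mul, Ideal.mul_top, Ideal.ofList, hset]
  have hk := hreg.regular_mod_prev k (by simp)
  rw [List.getElem_ofFn, hideal] at hk
  exact mem_of_isSMulRegular_quotient_of_smul_mem hk (by rwa [smul_eq_mul, mul_comm])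

variable {ι : Type*} [DecidableEq ι] (w : ι → S)

def koszulRelations : Submodule S (ι → S) :=
  span S (Set.range fun p : ι × ι => w p.1 • Pi.single p.2 1 - w p.2 • Pi.single p.1 1)

variable {w}

theorem exists_smul_single_sub_mem_koszulRelations (k : ι) {T : Set ι} {b : S}
    (hb : b ∈ Ideal.span (w '' T)) :
    ∃ d : ι → S, (∀ j ∉ T, d j = 0) ∧ b • Pi.single k 1 - d ∈ koszulRelations w := by
  induction hb using Submodule.span_induction with
  | mem _ hx =>
    obtain ⟨t, ht, rfl⟩ := hx
    refine ⟨w k • Pi.single t 1, fun j hj => ?_, subset_span ⟨(t, k), rfl⟩⟩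
    simp [show j ≠ t from fun h => hj (h ▸ ht)]
  | zero => exact ⟨0, fun _ _ => rfl, by simp⟩
  | add b c _ _ hb hc =>
    obtain ⟨d, hd, hdK⟩ := hb
    obtain ⟨e, he, heK⟩ := hc
    refine ⟨d + e, fun j hj => by simp [hd j hj, he j hj], ?_⟩
    convert add_mem hdK heK using 1
    rw [add_smul]; abel
  | smul a b _ hb =>
    obtain ⟨d, hd, hdK⟩ := hb
    refine ⟨a • d, fun j hj => by simp [hd j hj], ?_⟩
    convert smul_mem _ a hdK using 1
    rw [smul_sub, smul_smul, smul_eq_mul]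

variable [Fintype ι]

theorem koszulRelations_le_ker_linearCombination :
    koszulRelations w ≤ LinearMap.ker (Fintype.linearCombination S w) := by
  rw [koszulRelations, span_le]
  rintro _ ⟨⟨i, j⟩, rfl⟩
  simp [mul_comm]

theorem ker_linearCombination_eq_koszulRelations {m : ℕ} {w : Fin m → S}
    (hreg : RingTheory.Sequence.IsWeaklyRegular S (List.ofFn w)) :
    LinearMap.ker (Fintype.linearCombination S w) = koszulRelations w := by
  refine le_antisymm ?_ koszulRelations_le_ker_linearCombination
  suffices h : ∀ n : ℕ, ∀ a ∈ LinearMap.ker (Fintype.linearCombination S w),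
      (∀ j : Fin m, n ≤ j → a j = 0) → a ∈ koszulRelations w from
    fun a ha => h m a ha fun j hj => absurd j.2 (not_lt.2 hj)
  intro n
  induction n with
  | zero =>
    intro a _ ha
    rw [show a = 0 from funext fun j => ha j (Nat.zero_le _)]
    exact zero_mem _
  | succ n ih =>
    intro a ha hsupp
    by_cases hn : n < m
    swap
    · exact ih a ha fun j hj => absurd j.2 (by omega)
    set k : Fin m := ⟨n, hn⟩
    -- `w k` is regular modulo the earlier `w j`, so the top coefficient of `a` lies in their span
    -- and can be traded for Koszul relations supported below `k`.
    have hak : a k ∈ Ideal.span (w '' {j | j < k}) := by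
      refine hreg.mem_span_of_mul_mem k ?_
      have hterm : ∀ j ∈ Finset.univ.erase k, a j * w j ∈ Ideal.span (w '' {j | j < k}) := by
        intro j hj
        rcases lt_or_gt_of_ne (Finset.ne_of_mem_erase hj) with h | h
        · exact Ideal.mul_mem_left _ _ (Ideal.subset_span ⟨j, h, rfl⟩)
        · simp [hsupp j (Fin.lt_def.1 h)]
      refine (Submodule.add_mem_iff_left _ (Ideal.sum_mem _ hterm)).1 ?_
      rw [Finset.add_sum_erase _ (fun j => a j * w j) (Finset.mem_univ k)]
      have hsum : ∑ j, a j * w j = 0 := by simpa [Fintype.linearCombination_apply] using ha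
      exact hsum ▸ zero_mem _
    obtain ⟨d, hd, hdK⟩ := exists_smul_single_sub_mem_koszulRelations k hak
    have hrest : a - (a k • Pi.single k 1 - d) ∈ koszulRelations w := by
      refine ih _ (sub_mem ha (koszulRelations_le_ker_linearCombination hdK)) fun j hj => ?_
      have hdj : d j = 0 := hd j (not_lt.2 (Fin.le_def.2 hj))
      rcases eq_or_lt_of_le hj with h | h
      · obtain rfl : j = k := Fin.ext h.symm
        simp [hdj]
      · simp [hsupp j h, hdj, ne_of_gt (show k < j from Fin.lt_def.2 h)]
    simpa using add_mem hrest hdK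

theorem koszulRelations_le_ker_linearCombination_minors {r : ℕ}
    (Q : Matrix (Fin r) (Fin (r + 1)) S) (w : Fin (r + 1) → S) :
    koszulRelations w ≤ LinearMap.ker (Fintype.linearCombination S fun j : Fin (r + 1) =>
      (Submodule.Quotient.mk ((-1) ^ (j : ℕ) * (Q.submatrix id j.succAbove).det) :
        S ⧸ (Ideal.span (Set.range (Q *ᵥ w)) : Submodule S S))) := by
  rw [koszulRelations, span_le]
  rintro _ ⟨⟨i, j⟩, rfl⟩
  rw [SetLike.mem_coe, LinearMap.mem_ker, map_sub, map_smul, map_smul]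
  simp only [Fintype.linearCombination_apply_single, one_smul, ← Submodule.Quotient.mk_smul,
    ← Submodule.Quotient.mk_sub, Submodule.Quotient.mk_eq_zero, smul_eq_mul]
  simpa only [mul_comm (w _)] using Matrix.minor_mul_sub_mem_span_range_mulVec Q w j i

end Koszul

theorem LinearMap.exists_comp_eq_of_surjective_of_ker_le {R M N P : Type*} [Ring R]
    [AddCommGroup M] [AddCommGroup N] [AddCommGroup P] [Module R M] [Module R N] [Module R P]
    {f : M →ₗ[R] N} (hf : Function.Surjective f) (g : M →ₗ[R] P) (h : ker f ≤ ker g) :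
    ∃ s : N →ₗ[R] P, s ∘ₗ f = g := by
  refine ⟨(ker f).liftQ g h ∘ₗ (f.quotKerEquivOfSurjective hf).symm.toLinearMap, ?_⟩
  ext x
  simp

theorem stmt_1_general (S : Type*) [CommRing S] (r : ℕ)
    (w : Fin (r + 1) → S)
    (hreg : RingTheory.Sequence.IsRegular S (List.ofFn w))
    (Q : Matrix (Fin r) (Fin (r + 1)) S)
    (v : Fin r → S) (hv : ∀ i, v i = ∑ j, Q i j * w j)
    (I J : Ideal S)
    (hI : I = Ideal.span (Set.range v)) (hJ : J = Ideal.span (Set.range w))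
    (g : Fin (r + 1) → S)
    (hg : ∀ i, g i = (-1 : S) ^ (i : ℕ) * (Q.submatrix id i.succAbove).det)
    (hwJ : ∀ i, w i ∈ J) :
    ∃ s : J →ₗ[S] (S ⧸ (I : Submodule S S)),
      ∀ i, s ⟨w i, hwJ i⟩ = Submodule.Quotient.mk (g i) := by
  obtain rfl : v = Q *ᵥ w := funext fun l => hv l
  have hJrange : LinearMap.range (Fintype.linearCombination S w) = J := by
    rw [Fintype.range_linearCombination, hJ]
  let π := (Fintype.linearCombination S w).codRestrict J fun a =>
    hJrange ▸ LinearMap.mem_range_self _ a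
  have hπ : Function.Surjective π := by
    rintro ⟨y, hy⟩
    obtain ⟨a, rfl⟩ := hJrange ▸ hy
    exact ⟨a, rfl⟩
  obtain ⟨s, hs⟩ := LinearMap.exists_comp_eq_of_surjective_of_ker_le hπ
    (Fintype.linearCombination S fun j => (Submodule.Quotient.mk (g j) : S ⧸ (I : Submodule S S)))
    (by
      rw [LinearMap.ker_codRestrict, ker_linearCombination_eq_koszulRelations
        hreg.toIsWeaklyRegular, funext hg, hI]
      exact koszulRelations_le_ker_linearCombination_minors Q w)
  refine ⟨s, fun i => ?_⟩
  have hπi : π (Pi.single i 1) = ⟨w i, hwJ i⟩ := Subtype.ext (by simp [π])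
  rw [← hπi, ← LinearMap.comp_apply, hs]
  simp

/-- Let `S` be a commutative Noetherian ring, `w_1, …, w_{r+1}` a
regular sequence in `S`, `Q` an `r × (r+1)` matrix, `v i = ∑ j, Q i j * w j`,
`I = (v_1, …, v_r)`, `J = (w_1, …, w_{r+1})`, and `g i` the signed maximal
minors of `Q`. Then there is an `S`-module homomorphism `s : J → S/I` with
`s (w i) = g i mod I` for all `i`. -/
theorem stmt_1 (S : Type*) [CommRing S] [IsNoetherianRing S] (r : ℕ) (hr : 1 ≤ r)
    (w : Fin (r + 1) → S)
    (hreg : RingTheory.Sequence.IsRegular S (List.ofFn w))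
    (Q : Matrix (Fin r) (Fin (r + 1)) S)
    (v : Fin r → S) (hv : ∀ i, v i = ∑ j, Q i j * w j)
    (I J : Ideal S)
    (hI : I = Ideal.span (Set.range v)) (hJ : J = Ideal.span (Set.range w))
    (g : Fin (r + 1) → S)
    (hg : ∀ i, g i = (-1 : S) ^ (i : ℕ) * (Q.submatrix id i.succAbove).det)
    (hwJ : ∀ i, w i ∈ J) :
    ∃ s : J →ₗ[S] (S ⧸ (I : Submodule S S)),
      ∀ i, s ⟨w i, hwJ i⟩ = Submodule.Quotient.mk (g i) :=
  stmt_1_general S r w hreg Q v hv I J hI hJ g hg hwJ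
end

section
/- For all 1 ≤ i, j ≤ 4, x_i·H_j = x_j·H_i as 1×4 row vectors over S. -/
open MvPolynomial

/-- Variables of the generic Tom: coefficients `a_{ij}^k` (the six pairs
`(i,j)`, `2 ≤ i < j ≤ 5`, indexed by `Fin 6` in the order
`23, 24, 25, 34, 35, 45`), and the variables `x_1, …, x_4`, `z_1, …, z_4`. -/
abbrev TomVars : Type := (Fin 6 × Fin 4) ⊕ (Fin 4 ⊕ Fin 4)

/-- The polynomial ring `S = ℤ[a_{ij}^k, x_k, z_k]` in the 32 indeterminates. -/
abbrev TomS : Type := MvPolynomial TomVars ℤ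

/-- The variable `x_{k+1}`. -/
noncomputable def tomX (k : Fin 4) : TomS := X (Sum.inr (Sum.inl k))

/-- The variable `z_{k+1}`. -/
noncomputable def tomZ (k : Fin 4) : TomS := X (Sum.inr (Sum.inr k))

/-- The variable `a_{ij}^{k+1}`, with the pair `(i,j)` indexed by `Fin 6`
in the order `23, 24, 25, 34, 35, 45`. -/
noncomputable def tomAC (p : Fin 6) (k : Fin 4) : TomS := X (Sum.inl (p, k))

/-- The entry `a_{ij} = ∑ k, a_{ij}^k z_k`. -/
noncomputable def tomA (p : Fin 6) : TomS := ∑ k : Fin 4, tomAC p k * tomZ k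

/-- The Pfaffians `P_1, P_2, P_3, P_4` of the generic Tom matrix. -/
noncomputable def tomP (i : Fin 4) : TomS :=
  ![tomX 1 * tomA 5 - tomX 2 * tomA 4 + tomX 3 * tomA 3,
    tomX 0 * tomA 5 - tomX 2 * tomA 2 + tomX 3 * tomA 1,
    tomX 0 * tomA 4 - tomX 1 * tomA 2 + tomX 3 * tomA 0,
    tomX 0 * tomA 3 - tomX 1 * tomA 1 + tomX 2 * tomA 0] i

/-- The `4 × 4` matrix `Q` with `Q_{1k} = x₂a₄₅ᵏ − x₃a₃₅ᵏ + x₄a₃₄ᵏ`, etc. -/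
noncomputable def tomQ : Matrix (Fin 4) (Fin 4) TomS :=
  Matrix.of
    ![fun k => tomX 1 * tomAC 5 k - tomX 2 * tomAC 4 k + tomX 3 * tomAC 3 k,
      fun k => tomX 0 * tomAC 5 k - tomX 2 * tomAC 2 k + tomX 3 * tomAC 1 k,
      fun k => tomX 0 * tomAC 4 k - tomX 1 * tomAC 2 k + tomX 3 * tomAC 0 k,
      fun k => tomX 0 * tomAC 3 k - tomX 1 * tomAC 1 k + tomX 2 * tomAC 0 k]

/-- The row vector `H_i`: the `m`-th entry is `(-1)^(m+1)` times the
determinant of the `3 × 3` submatrix of `Q̂_i` (the matrix `Q` with the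
`i`-th row deleted) obtained by deleting the `m`-th column (0-indexed, the
sign is `(-1)^(m : ℕ)`). -/
noncomputable def tomH (i : Fin 4) (m : Fin 4) : TomS :=
  (-1 : TomS) ^ (m : ℕ) * (tomQ.submatrix i.succAbove m.succAbove).det

/-!
The `k`-th column of `Q` is `D Aᵏ x` with `D = diag(1, -1, 1, -1)` and `Aᵏ` skew-symmetric, so the
rows of `Q` satisfy `∑ i, (-1)^i x_i Q_i = 0`. For any square matrix whose rows satisfy a relation
`∑ i, c_i Q_i = 0`, the rows `C_i` of its cofactor matrix satisfy `c_i C_j = c_j C_i`: replacing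
row `j` of the matrix whose determinants define `C_i` by the relation leaves only the multiple
`c_i` of row `i`, and a transposition turns the result into `-C_j`. Finally `H_i = (-1)^i C_i`.
-/

open Matrix Finset

namespace Matrix

variable {n R : Type*} [Fintype n] [DecidableEq n] [CommRing R]

theorem vecMul_updateRow (A : Matrix n n R) (c w : n → R) (i : n) :
    c ᵥ* A.updateRow i w = c ᵥ* A + c i • (w - A i) := by
  ext l
  have hsingle := Finset.sum_ite_eq' univ i fun k => c k * (w l - A k l)
  simp only [mem_univ, if_true] at hsingle
  simp only [vecMul, dotProduct, updateRow_apply, Pi.add_apply, Pi.smul_apply, Pi.sub_apply,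
    smul_eq_mul, ← hsingle, ← sum_add_distrib]
  refine sum_congr rfl fun k _ => ?_
  split_ifs with hk
  · subst hk; ring
  · ring

theorem det_updateRow_updateRow_comm (A : Matrix n n R) {i j : n} (hij : i ≠ j) (u v : n → R) :
    ((A.updateRow i u).updateRow j v).det = -((A.updateRow j u).updateRow i v).det := by
  have hswap : ((A.updateRow j u).updateRow i v).submatrix (Equiv.swap i j) id =
      (A.updateRow i u).updateRow j v := by
    ext k l
    rcases eq_or_ne k i with rfl | hki
    · simp [updateRow_apply, hij, hij.symm]
    rcases eq_or_ne k j with rfl | hkj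
    · simp [updateRow_apply]
    simp [updateRow_apply, hki, hkj, Equiv.swap_apply_of_ne_of_ne hki hkj]
  rw [← hswap, det_permute, Equiv.Perm.sign_swap hij]
  simp

theorem mul_adjugate_apply_comm_of_vecMul_eq_zero {A : Matrix n n R} {c : n → R}
    (hc : c ᵥ* A = 0) (m i j : n) : c i * adjugate A m j = c j * adjugate A m i := by
  rcases eq_or_ne i j with rfl | hij
  · rfl
  have hrow :
      ∑ k, c k • (A.updateRow i (Pi.single m 1)) k = c i • Pi.single m 1 + (-c i) • A i := by
    rw [← vecMul_eq_sum, vecMul_updateRow, hc, zero_add, smul_sub, sub_eq_add_neg, neg_smul]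
  have hsingle : ((A.updateRow i (Pi.single m 1)).updateRow j (Pi.single m 1)).det = 0 :=
    det_zero_of_row_eq hij (by simp [updateRow_ne hij])
  have hcancel :
      (A.updateRow j (Pi.single m 1)).updateRow i (A i) = A.updateRow j (Pi.single m 1) := by
    simpa [updateRow_ne hij] using updateRow_eq_self (A.updateRow j (Pi.single m 1)) i
  calc c i * adjugate A m j
      = -c i * ((A.updateRow i (Pi.single m 1)).updateRow j (A i)).det := by
        rw [adjugate_apply, det_updateRow_updateRow_comm A hij, hcancel]; ring
    _ = c j * adjugate A m i := by
        rw [adjugate_apply, ← smul_eq_mul (c j), ← det_updateRow_sum, hrow, det_updateRow_add,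
          det_updateRow_smul, det_updateRow_smul, hsingle]
        ring

theorem mul_signed_minor_comm_of_vecMul_eq_zero {n : ℕ}
    {A : Matrix (Fin (n + 1)) (Fin (n + 1)) R} {x : Fin (n + 1) → R}
    (hx : (fun i : Fin (n + 1) => (-1) ^ (i : ℕ) * x i) ᵥ* A = 0) (i j m : Fin (n + 1)) :
    x i * ((-1) ^ (m : ℕ) * (A.submatrix j.succAbove m.succAbove).det) =
      x j * ((-1) ^ (m : ℕ) * (A.submatrix i.succAbove m.succAbove).det) := by
  have key := mul_adjugate_apply_comm_of_vecMul_eq_zero hx m i j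
  simp only [adjugate_fin_succ_eq_det_submatrix, pow_add] at key
  have hsq (k : ℕ) : ((-1 : R) ^ k) ^ 2 = 1 := by rw [← pow_mul, pow_mul']; simp
  have hi := hsq i
  have hj := hsq j
  generalize (-1 : R) ^ (i : ℕ) = si, (-1 : R) ^ (j : ℕ) = sj at key hi hj
  linear_combination si * sj * key -
    (x i * ((-1) ^ (m : ℕ) * (A.submatrix j.succAbove m.succAbove).det) -
      x j * ((-1) ^ (m : ℕ) * (A.submatrix i.succAbove m.succAbove).det)) * (sj ^ 2 * hi + hj)

end Matrix

theorem tomQ_row_relation : (fun i : Fin 4 => (-1) ^ (i : ℕ) * tomX i) ᵥ* tomQ = 0 := by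
  funext k
  simp only [vecMul, dotProduct, tomQ, of_apply, Fin.sum_univ_four, Matrix.cons_val,
    Fin.coe_ofNat_eq_mod, Nat.reduceMod, Pi.zero_apply]
  ring

/-- For all `1 ≤ i, j ≤ 4`, `x_i·H_j = x_j·H_i` as `1 × 4`
row vectors over `S`. -/
theorem stmt_6 :
    ∀ i j : Fin 4, ∀ m : Fin 4, tomX i * tomH j m = tomX j * tomH i m :=
  Matrix.mul_signed_minor_comm_of_vecMul_eq_zero tomQ_row_relation
end

section
/- For each m = 1, …, 4 there exist polynomials K_m, L_m ∈ S such that h_m = x_3·K_m + (a_2x_2 − a_3x_1)·L_m; consequently h_m = x_3·(K_m + a_1L_m) − L_m·P_2. -/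
/-!
Modulo `x₃`, the first and third rows of `Q` are `x₁b₃ − x₂b₂` and `a₃b₂ − a₂b₃`, where `bᵢ` is
the row vector `(bᵢᵏ)ₖ`. Both lie in the span of `b₂, b₃`, so every `3 × 3` minor of `Q` is,
modulo `x₃`, the determinant `a₂x₂ − a₃x₁` of the coefficient matrix times the corresponding
minor of the matrix with rows `b₂`, `Q₂`, `b₃`.
-/

open MvPolynomial

/-- Variables of the generic Jerry: coefficients `a_i^k`, `b_i^k`, `c^k`
(`1 ≤ i ≤ 3`, `1 ≤ k ≤ 4`) and the variables `x_1, x_2, x_3`, `z_1, …, z_4`. -/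
abbrev JerryVars : Type :=
  ((Fin 3 × Fin 4) ⊕ (Fin 3 × Fin 4)) ⊕ (Fin 4 ⊕ (Fin 3 ⊕ Fin 4))

/-- The polynomial ring `S = ℤ[x_i, z_k, c^k, a_i^k, b_i^k]` in the 35
indeterminates. -/
abbrev JerryS : Type := MvPolynomial JerryVars ℤ

/-- The variable `a_{i+1}^{k+1}`. -/
noncomputable def jAC (i : Fin 3) (k : Fin 4) : JerryS :=
  X (Sum.inl (Sum.inl (i, k)))

/-- The variable `b_{i+1}^{k+1}`. -/
noncomputable def jBC (i : Fin 3) (k : Fin 4) : JerryS :=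
  X (Sum.inl (Sum.inr (i, k)))

/-- The variable `c^{k+1}`. -/
noncomputable def jCC (k : Fin 4) : JerryS := X (Sum.inr (Sum.inl k))

/-- The variable `x_{i+1}`. -/
noncomputable def jX (i : Fin 3) : JerryS := X (Sum.inr (Sum.inr (Sum.inl i)))

/-- The variable `z_{k+1}`. -/
noncomputable def jZ (k : Fin 4) : JerryS := X (Sum.inr (Sum.inr (Sum.inr k)))

/-- The entry `a_i = ∑ k, a_i^k z_k`. -/
noncomputable def jA (i : Fin 3) : JerryS := ∑ k : Fin 4, jAC i k * jZ k

/-- The entry `b_i = ∑ k, b_i^k z_k`. -/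
noncomputable def jB (i : Fin 3) : JerryS := ∑ k : Fin 4, jBC i k * jZ k

/-- The entry `c = ∑ k, c^k z_k`. -/
noncomputable def jC : JerryS := ∑ k : Fin 4, jCC k * jZ k

/-- The Pfaffians `P_1, …, P_5` of the generic Jerry matrix. -/
noncomputable def jerryP (i : Fin 5) : JerryS :=
  ![jB 0 * jX 2 - jB 1 * jX 1 + jB 2 * jX 0,
    jA 0 * jX 2 - jA 1 * jX 1 + jA 2 * jX 0,
    jC * jX 2 - jA 1 * jB 2 + jA 2 * jB 1,
    jC * jX 1 - jA 0 * jB 2 + jA 2 * jB 0,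
    jC * jX 0 - jA 0 * jB 1 + jA 1 * jB 0] i

/-- The generic integral Jerry ideal `I = (P_1, …, P_5)`. -/
noncomputable def jerryIdeal : Ideal JerryS := Ideal.span (Set.range jerryP)

/-- The `3 × 4` matrix `Q` with `Q_{1k} = b₁ᵏx₃ − b₂ᵏx₂ + b₃ᵏx₁`,
`Q_{2k} = a₁ᵏx₃ − a₂ᵏx₂ + a₃ᵏx₁`, `Q_{3k} = cᵏx₃ − a₂b₃ᵏ + a₃b₂ᵏ`. -/
noncomputable def jerryQ : Matrix (Fin 3) (Fin 4) JerryS :=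
  Matrix.of
    ![fun k => jBC 0 k * jX 2 - jBC 1 k * jX 1 + jBC 2 k * jX 0,
      fun k => jAC 0 k * jX 2 - jAC 1 k * jX 1 + jAC 2 k * jX 0,
      fun k => jCC k * jX 2 - jA 1 * jBC 2 k + jA 2 * jBC 1 k]

/-- `h_m`: `(-1)^(m+1)` times the determinant of the `3 × 3` submatrix of `Q`
obtained by deleting the `m`-th column (0-indexed, the sign is
`(-1)^(m : ℕ)`). -/
noncomputable def jerryH (m : Fin 4) : JerryS :=
  (-1 : JerryS) ^ (m : ℕ) * (jerryQ.submatrix id m.succAbove).det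

namespace Matrix

variable {R : Type*} [CommRing R]

theorem det_fin_three_of_rows_mem_span_pair (α₁ α₂ γ₁ γ₂ : R) (p v q : Fin 3 → R) :
    det (of ![α₁ • p + α₂ • q, v, γ₁ • p + γ₂ • q]) =
      (α₁ * γ₂ - α₂ * γ₁) * det (of ![p, v, q]) := by
  simp only [det_fin_three, of_apply, cons_val', cons_val_fin_one, cons_val_zero, cons_val_one,
    cons_val, Pi.add_apply, Pi.smul_apply, smul_eq_mul]
  ring

theorem exists_det_fin_three_add_smul_rows (z : R) (u r v w s : Fin 3 → R) :
    ∃ K, det (of ![z • u + r, v, z • w + s]) = z * K + det (of ![r, v, s]) := by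
  refine ⟨det (of ![u, v, z • w + s]) + det (of ![r, v, w]), ?_⟩
  simp only [det_fin_three, of_apply, cons_val', cons_val_fin_one, cons_val_zero, cons_val_one,
    cons_val, Pi.add_apply, Pi.smul_apply, smul_eq_mul]
  ring

end Matrix

open Matrix

theorem jerryQ_submatrix_eq (f : Fin 3 → Fin 4) :
    jerryQ.submatrix id f =
      of ![jX 2 • (jBC 0 ∘ f) + ((-jX 1) • (jBC 1 ∘ f) + jX 0 • (jBC 2 ∘ f)),
        jerryQ 1 ∘ f,
        jX 2 • (jCC ∘ f) + (jA 2 • (jBC 1 ∘ f) + (-jA 1) • (jBC 2 ∘ f))] := by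
  refine Matrix.ext fun i j => ?_
  fin_cases i <;>
    simp only [jerryQ, Fin.zero_eta, Fin.mk_one, Fin.reduceFinMk, submatrix_apply, id_eq, of_apply,
      cons_val', cons_val_fin_one, cons_val_zero, cons_val_one, cons_val, Pi.add_apply,
      Pi.smul_apply, Pi.neg_apply, Function.comp_apply, smul_eq_mul, neg_smul] <;>
    ring

theorem exists_jerryH_eq (m : Fin 4) :
    ∃ K L : JerryS, jerryH m = jX 2 * K + (jA 1 * jX 1 - jA 2 * jX 0) * L := by
  obtain ⟨K, hK⟩ := exists_det_fin_three_add_smul_rows (jX 2) (jBC 0 ∘ m.succAbove)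
    ((-jX 1) • (jBC 1 ∘ m.succAbove) + jX 0 • (jBC 2 ∘ m.succAbove)) (jerryQ 1 ∘ m.succAbove)
    (jCC ∘ m.succAbove) (jA 2 • (jBC 1 ∘ m.succAbove) + (-jA 1) • (jBC 2 ∘ m.succAbove))
  rw [det_fin_three_of_rows_mem_span_pair] at hK
  refine ⟨(-1) ^ (m : ℕ) * K,
    (-1) ^ (m : ℕ) * det (of ![jBC 1 ∘ m.succAbove, jerryQ 1 ∘ m.succAbove, jBC 2 ∘ m.succAbove]),
    ?_⟩
  rw [jerryH, jerryQ_submatrix_eq, hK]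
  ring

/-- For each `m = 1, …, 4` there exist polynomials
`K_m, L_m ∈ S` with `h_m = x₃·K_m + (a₂x₂ − a₃x₁)·L_m`; consequently
`h_m = x₃·(K_m + a₁L_m) − L_m·P_2`. -/
theorem stmt_11 :
    ∀ m : Fin 4, ∃ K L : JerryS,
      jerryH m = jX 2 * K + (jA 1 * jX 1 - jA 2 * jX 0) * L ∧
      jerryH m = jX 2 * (K + jA 0 * L) - L * jerryP 1 := by
  intro m
  obtain ⟨K, L, hKL⟩ := exists_jerryH_eq m
  refine ⟨K, L, hKL, ?_⟩
  rw [hKL, jerryP, cons_val_one, cons_val_zero]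
  ring
end
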